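/- Let k be a field of characteristic zero, let Ω be a k-vector space of dimension 2, let ⋆ ∈ Ω, and let Λ be a subspace of (Ω⊗Ω) ⊕ (Ω⊗Ω). There exists a unit action (α, β) for ⋆ with α = β that is compatible with Λ if and only if there exists a basis (∘₁, ∘₂) of Ω with ⋆ = ∘₁ + ∘₂ such that Λ is contained in the span of (∘₁⊗∘₁, ∘₁⊗∘₁), (∘₁⊗∘₂, ∘₁⊗∘₂) + (∘₂⊗∘₁, ∘₂⊗∘₁), (∘₂⊗∘₂, 0), and (0, ∘₂⊗∘₂) in (Ω⊗Ω) ⊕ (Ω⊗Ω). -/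

import Mathlib

open TensorProduct

section Defs

variable {k : Type*} [Field k]

noncomputable def contrL {Ω : Type*} [AddCommGroup Ω] [Module k Ω]
    (φ : Module.Dual k Ω) : Ω ⊗[k] Ω →ₗ[k] Ω :=
  (TensorProduct.lid k Ω).toLinearMap ∘ₗ TensorProduct.map φ LinearMap.id

noncomputable def contrR {Ω : Type*} [AddCommGroup Ω] [Module k Ω]
    (φ : Module.Dual k Ω) : Ω ⊗[k] Ω →ₗ[k] Ω :=
  (TensorProduct.rid k Ω).toLinearMap ∘ₗ TensorProduct.map LinearMap.id φ

noncomputable def contrB {Ω₁ Ω₂ : Type*} [AddCommGroup Ω₁] [Module k Ω₁]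
    [AddCommGroup Ω₂] [Module k Ω₂]
    (φ : Module.Dual k Ω₁) (ψ : Module.Dual k Ω₂) : Ω₁ ⊗[k] Ω₂ →ₗ[k] k :=
  (TensorProduct.lid k k).toLinearMap ∘ₗ TensorProduct.map φ ψ

/-- The coherence equations (C1)-(C5) for a pair `uv ∈ (Ω⊗Ω) × (Ω⊗Ω)`. -/
def CoherenceEqs {Ω : Type*} [AddCommGroup Ω] [Module k Ω]
    (α β : Module.Dual k Ω) (star : Ω)
    (uv : (Ω ⊗[k] Ω) × (Ω ⊗[k] Ω)) : Prop :=
  contrL β uv.1 = contrL β uv.2 ∧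
  contrL α uv.1 = contrR β uv.2 ∧
  contrR α uv.1 = contrR α uv.2 ∧
  contrR β uv.1 = contrB β β uv.2 • star ∧
  contrB α α uv.1 • star = contrL α uv.2

/-- The compatibility equations (C1)-(C3). -/
def CompatEqs {Ω : Type*} [AddCommGroup Ω] [Module k Ω]
    (α β : Module.Dual k Ω)
    (uv : (Ω ⊗[k] Ω) × (Ω ⊗[k] Ω)) : Prop :=
  contrL β uv.1 = contrL β uv.2 ∧
  contrL α uv.1 = contrR β uv.2 ∧
  contrR α uv.1 = contrR α uv.2

def IsCoherent {Ω : Type*} [AddCommGroup Ω] [Module k Ω]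
    (α β : Module.Dual k Ω) (star : Ω)
    (Λ : Submodule k ((Ω ⊗[k] Ω) × (Ω ⊗[k] Ω))) : Prop :=
  ∀ uv ∈ Λ, CoherenceEqs α β star uv

def IsCompatible {Ω : Type*} [AddCommGroup Ω] [Module k Ω]
    (α β : Module.Dual k Ω)
    (Λ : Submodule k ((Ω ⊗[k] Ω) × (Ω ⊗[k] Ω))) : Prop :=
  ∀ uv ∈ Λ, CompatEqs α β uv

end Defs
section Aux

variable {k : Type*} [Field k] {Ω : Type*} [AddCommGroup Ω] [Module k Ω]

lemma contrL_tmul (φ : Module.Dual k Ω) (a c : Ω) : contrL φ (a ⊗ₜ[k] c) = φ a • c := by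
  simp [contrL]

lemma contrR_tmul (φ : Module.Dual k Ω) (a c : Ω) : contrR φ (a ⊗ₜ[k] c) = φ c • a := by
  simp [contrR]

lemma contrB_tmul (φ ψ : Module.Dual k Ω) (a c : Ω) : contrB φ ψ (a ⊗ₜ[k] c) = φ a * ψ c := by
  simp [contrB, smul_eq_mul]

noncomputable def cij (b : Module.Basis (Fin 2) k Ω) (i j : Fin 2) : Ω ⊗[k] Ω →ₗ[k] k :=
  contrB (b.coord i) (b.coord j)

lemma coord_self (b : Module.Basis (Fin 2) k Ω) (i p : Fin 2) :
    b.coord i (b p) = if p = i then 1 else 0 := by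
  simp [Module.Basis.coord_apply, Finsupp.single_apply]

lemma cij_tmul (b : Module.Basis (Fin 2) k Ω) (i j p q : Fin 2) :
    cij b i j (b p ⊗ₜ[k] b q) = (if p = i then (1:k) else 0) * (if q = j then 1 else 0) := by
  rw [cij, contrB_tmul, coord_self, coord_self]

lemma repr_eq (b : Module.Basis (Fin 2) k Ω) (u : Ω ⊗[k] Ω) :
    u = cij b 0 0 u • (b 0 ⊗ₜ[k] b 0) + cij b 0 1 u • (b 0 ⊗ₜ[k] b 1)
      + cij b 1 0 u • (b 1 ⊗ₜ[k] b 0) + cij b 1 1 u • (b 1 ⊗ₜ[k] b 1) := by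
  have : LinearMap.id (R := k) (M := Ω ⊗[k] Ω)
      = (cij b 0 0).smulRight (b 0 ⊗ₜ[k] b 0) + (cij b 0 1).smulRight (b 0 ⊗ₜ[k] b 1)
      + (cij b 1 0).smulRight (b 1 ⊗ₜ[k] b 0) + (cij b 1 1).smulRight (b 1 ⊗ₜ[k] b 1) := by
    apply (Module.Basis.tensorProduct b b).ext
    rintro ⟨i, j⟩
    simp only [Module.Basis.tensorProduct_apply, LinearMap.add_apply, LinearMap.smulRight_apply,
      LinearMap.id_apply, cij_tmul]
    fin_cases i <;> fin_cases j <;> simp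
  conv_lhs => rw [← LinearMap.id_apply (R := k) u, this]
  simp

lemma contrL_coord0 (b : Module.Basis (Fin 2) k Ω) (u : Ω ⊗[k] Ω) :
    contrL (b.coord 0) u = cij b 0 0 u • b 0 + cij b 0 1 u • b 1 := by
  have : contrL (b.coord 0)
      = (cij b 0 0).smulRight (b 0) + (cij b 0 1).smulRight (b 1) := by
    apply (Module.Basis.tensorProduct b b).ext
    rintro ⟨i, j⟩
    simp only [Module.Basis.tensorProduct_apply, LinearMap.add_apply, LinearMap.smulRight_apply,
      cij_tmul, contrL_tmul, coord_self]
    fin_cases i <;> fin_cases j <;> simp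
  rw [this]; simp

lemma contrR_coord0 (b : Module.Basis (Fin 2) k Ω) (u : Ω ⊗[k] Ω) :
    contrR (b.coord 0) u = cij b 0 0 u • b 0 + cij b 1 0 u • b 1 := by
  have : contrR (b.coord 0)
      = (cij b 0 0).smulRight (b 0) + (cij b 1 0).smulRight (b 1) := by
    apply (Module.Basis.tensorProduct b b).ext
    rintro ⟨i, j⟩
    simp only [Module.Basis.tensorProduct_apply, LinearMap.add_apply, LinearMap.smulRight_apply,
      cij_tmul, contrR_tmul, coord_self]
    fin_cases i <;> fin_cases j <;> simp
  rw [this]; simp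

lemma pair_inj (b : Module.Basis (Fin 2) k Ω) {x y x' y' : k}
    (h : x • b 0 + y • b 1 = x' • b 0 + y' • b 1) : x = x' ∧ y = y' := by
  have h0 := congrArg (b.coord 0) h
  have h1 := congrArg (b.coord 1) h
  simp only [map_add, map_smul, coord_self, smul_eq_mul] at h0 h1
  constructor
  · simpa using h0
  · simpa using h1

end Aux
section Main

open Module Submodule

variable {k : Type*} [Field k] {Ω : Type*} [AddCommGroup Ω] [Module k Ω]

noncomputable def compatMap (α : Module.Dual k Ω) :
    ((Ω ⊗[k] Ω) × (Ω ⊗[k] Ω)) →ₗ[k] Ω × (Ω × Ω) :=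
  (contrL α ∘ₗ LinearMap.fst k _ _ - contrL α ∘ₗ LinearMap.snd k _ _).prod
    ((contrL α ∘ₗ LinearMap.fst k _ _ - contrR α ∘ₗ LinearMap.snd k _ _).prod
      (contrR α ∘ₗ LinearMap.fst k _ _ - contrR α ∘ₗ LinearMap.snd k _ _))

lemma compatEqs_iff (α : Module.Dual k Ω) (uv : (Ω ⊗[k] Ω) × (Ω ⊗[k] Ω)) :
    CompatEqs α α uv ↔ uv ∈ LinearMap.ker (compatMap α) := by
  simp [CompatEqs, compatMap, LinearMap.mem_ker, Prod.ext_iff, sub_eq_zero, and_assoc]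

end Main

/-- Corollary: dimension-2 case, compatible unit actions with α = β. -/
theorem dim_two_eq_compatible_classification
    {k : Type*} [Field k] [CharZero k]
    {Ω : Type*} [AddCommGroup Ω] [Module k Ω] [FiniteDimensional k Ω]
    (hdim : Module.finrank k Ω = 2)
    (star : Ω) (Λ : Submodule k ((Ω ⊗[k] Ω) × (Ω ⊗[k] Ω))) :
    (∃ α β : Module.Dual k Ω,
        α star = 1 ∧ β star = 1 ∧ α = β ∧ IsCompatible α β Λ) ↔
    (∃ b : Module.Basis (Fin 2) k Ω, star = b 0 + b 1 ∧
      Λ ≤ Submodule.span k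
        ({(b 0 ⊗ₜ[k] b 0, b 0 ⊗ₜ[k] b 0),
          (b 0 ⊗ₜ[k] b 1, b 0 ⊗ₜ[k] b 1) + (b 1 ⊗ₜ[k] b 0, b 1 ⊗ₜ[k] b 0),
          (b 1 ⊗ₜ[k] b 1, 0),
          (0, b 1 ⊗ₜ[k] b 1)} :
          Set ((Ω ⊗[k] Ω) × (Ω ⊗[k] Ω)))) := by
  constructor
  · rintro ⟨α, β, hα1, hβ1, rfl, hcompat⟩
    -- construct the basis
    have hs0 : star ≠ 0 := by
      intro h; rw [h, map_zero] at hα1; exact zero_ne_one hα1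
    have hne : Submodule.span k {star} ≠ ⊤ := by
      intro h
      have h1 : Module.finrank k (Submodule.span k {star}) = 1 :=
        finrank_span_singleton hs0
      rw [h, finrank_top] at h1
      omega
    obtain ⟨y, hy⟩ : ∃ y, y ∉ Submodule.span k {star} := by
      by_contra h
      push_neg at h
      exact hne (eq_top_iff.mpr fun x _ => h x)
    set w : Ω := y - α y • star with hw
    have hαw : α w = 0 := by simp [hw, hα1]
    have hw0 : w ≠ 0 := by
      intro h
      apply hy
      have hy2 : y = α y • star := sub_eq_zero.mp h
      exact hy2 ▸ Submodule.smul_mem _ _ (Submodule.mem_span_singleton_self star)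
    have hli : LinearIndependent k ![star - w, w] := by
      rw [LinearIndependent.pair_iff]
      intro s t hst
      have h0 := congrArg α hst
      simp only [map_add, map_smul, map_sub, hα1, hαw, smul_eq_mul, map_zero,
        mul_zero, sub_zero, mul_one, add_zero] at h0
      subst h0
      simp only [zero_smul, zero_add] at hst
      rcases smul_eq_zero.mp hst with ht | hwz
      · exact ⟨rfl, ht⟩
      · exact absurd hwz hw0
    have hcard : Fintype.card (Fin 2) = Module.finrank k Ω := by simp [hdim]
    let b : Module.Basis (Fin 2) k Ω := basisOfLinearIndependentOfCardEqFinrank hli hcard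
    have hb : ⇑b = ![star - w, w] := coe_basisOfLinearIndependentOfCardEqFinrank hli hcard
    have hb0 : b 0 = star - w := by rw [hb]; rfl
    have hb1 : b 1 = w := by rw [hb]; rfl
    have hstar : star = b 0 + b 1 := by rw [hb0, hb1]; abel
    have hα0 : α = b.coord 0 := by
      apply b.ext
      intro i
      fin_cases i
      · show α (b 0) = b.coord 0 (b 0)
        rw [coord_self, if_pos rfl, hb0, map_sub, hα1, hαw, sub_zero]
      · show α (b 1) = b.coord 0 (b 1)
        rw [coord_self, if_neg (by decide), hb1, hαw]
    refine ⟨b, hstar, ?_⟩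
    intro uv huv
    obtain ⟨h1, h2, h3⟩ := hcompat uv huv
    rw [hα0] at h1 h2 h3
    rw [contrL_coord0, contrL_coord0] at h1
    rw [contrL_coord0, contrR_coord0] at h2
    rw [contrR_coord0, contrR_coord0] at h3
    obtain ⟨e00, e01⟩ := pair_inj b h1
    obtain ⟨_, e02⟩ := pair_inj b h2
    obtain ⟨_, e03⟩ := pair_inj b h3
    -- coefficients
    have key : uv = cij b 0 0 uv.1 • ((b 0 ⊗ₜ[k] b 0, b 0 ⊗ₜ[k] b 0) :
          (Ω ⊗[k] Ω) × (Ω ⊗[k] Ω))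
        + cij b 0 1 uv.1 • ((b 0 ⊗ₜ[k] b 1, b 0 ⊗ₜ[k] b 1) + (b 1 ⊗ₜ[k] b 0, b 1 ⊗ₜ[k] b 0))
        + cij b 1 1 uv.1 • ((b 1 ⊗ₜ[k] b 1, 0) : (Ω ⊗[k] Ω) × (Ω ⊗[k] Ω))
        + cij b 1 1 uv.2 • ((0, b 1 ⊗ₜ[k] b 1) : (Ω ⊗[k] Ω) × (Ω ⊗[k] Ω)) := by
      have r1 := repr_eq b uv.1
      have r2 := repr_eq b uv.2
      apply Prod.ext
      · simp only [Prod.fst_add, Prod.smul_fst, Prod.smul_mk, Prod.mk_add_mk, smul_zero]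
        rw [smul_add]
        calc uv.1 = cij b 0 0 uv.1 • (b 0 ⊗ₜ[k] b 0) + cij b 0 1 uv.1 • (b 0 ⊗ₜ[k] b 1)
              + cij b 1 0 uv.1 • (b 1 ⊗ₜ[k] b 0) + cij b 1 1 uv.1 • (b 1 ⊗ₜ[k] b 1) := r1
          _ = _ := by
              rw [show cij b 1 0 uv.1 = cij b 0 1 uv.1 by rw [e03, ← e02]]
              abel
      · simp only [Prod.snd_add, Prod.smul_snd, Prod.smul_mk, Prod.mk_add_mk, smul_zero]
        rw [smul_add]
        calc uv.2 = cij b 0 0 uv.2 • (b 0 ⊗ₜ[k] b 0) + cij b 0 1 uv.2 • (b 0 ⊗ₜ[k] b 1)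
              + cij b 1 0 uv.2 • (b 1 ⊗ₜ[k] b 0) + cij b 1 1 uv.2 • (b 1 ⊗ₜ[k] b 1) := r2
          _ = _ := by
              rw [← e00, ← e01, show cij b 1 0 uv.2 = cij b 0 1 uv.1 from e02.symm]
              abel
    rw [key]
    refine Submodule.add_mem _ (Submodule.add_mem _ (Submodule.add_mem _ ?_ ?_) ?_) ?_ <;>
      exact Submodule.smul_mem _ _ (Submodule.subset_span (by simp))
  · rintro ⟨b, hstar, hΛ⟩
    refine ⟨b.coord 0, b.coord 0, ?_, ?_, rfl, ?_⟩
    · rw [hstar]; simp [coord_self]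
    · rw [hstar]; simp [coord_self]
    · intro uv huv
      rw [compatEqs_iff]
      refine hΛ.trans (Submodule.span_le.mpr ?_) huv
      rintro x hx
      rw [SetLike.mem_coe, LinearMap.mem_ker, ← sub_eq_zero]
      rcases hx with rfl | rfl | rfl | rfl <;>
        · rw [sub_zero]
          simp [compatMap, Prod.ext_iff, sub_eq_zero, contrL_tmul, contrR_tmul, coord_self]
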